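/- Second derivative of the one-qubit complexity profile: the real function f(r) = −(r²/2)·arctanh(r) − (r/4)·log((1 − r²)/4) (natural logarithm) is twice differentiable at every r with 0 < r < 1, and its second derivative equals f″(r) = −r/(2(1 − r²)) − arctanh(r); in particular f″(r) < 0 for all 0 < r < 1, so f is strictly concave on (0, 1). -/

import Mathlib

/-- The inverse hyperbolic tangent. -/
noncomputable def arctanh (x : ℝ) : ℝ := (1/2) * Real.log ((1 + x) / (1 - x))

noncomputable def fC (r : ℝ) : ℝ :=
  -(r^2/2) * arctanh r - (r/4) * Real.log ((1 - r^2)/4)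

/-!
With `arctanh' = 1/(1 - r²)`, the two terms `∓ r²/(2(1 - r²))` produced by `arctanh` and by the
logarithm cancel, leaving `fC' r = -r · arctanh r - log((1 - r²)/4) / 4`. Differentiating again gives
`-r/(1 - r²) + r/(2(1 - r²)) - arctanh r`, and both remaining terms are negative on `(0, 1)`.
-/

open Real Set Filter

lemma arctanh_eq_artanh {x : ℝ} (hx : x ∈ Icc (-1) 1) : arctanh x = artanh x :=
  (artanh_eq_half_log hx).symm

lemma arctanh_pos {x : ℝ} (hx : x ∈ Ioo 0 1) : 0 < arctanh x := by
  rw [arctanh_eq_artanh ⟨by linarith [hx.1], hx.2.le⟩]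
  exact artanh_pos hx

lemma hasDerivAt_arctanh {r : ℝ} (hr : 1 - r ^ 2 ≠ 0) :
    HasDerivAt arctanh (1 / (1 - r ^ 2)) r := by
  obtain ⟨hm, hp⟩ : 1 - r ≠ 0 ∧ 1 + r ≠ 0 :=
    mul_ne_zero_iff.mp (by rwa [show (1 - r) * (1 + r) = 1 - r ^ 2 by ring])
  have hquot : HasDerivAt (fun x => (1 + x) / (1 - x))
      ((1 * (1 - r) - (1 + r) * (-1)) / (1 - r) ^ 2) r :=
    ((hasDerivAt_id r).const_add 1).div ((hasDerivAt_id r).neg.const_add 1) hm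
  refine ((hquot.log (div_ne_zero hp hm)).const_mul (1 / 2)).congr_deriv ?_
  field_simp
  ring

lemma hasDerivAt_log_one_sub_sq_div_four {r : ℝ} (hr : 1 - r ^ 2 ≠ 0) :
    HasDerivAt (fun x => log ((1 - x ^ 2) / 4)) (-2 * r / (1 - r ^ 2)) r := by
  have hquot : HasDerivAt (fun x => (1 - x ^ 2) / 4) (-(2 * r ^ 1) / 4) r :=
    ((hasDerivAt_pow 2 r).const_sub 1).div_const 4
  refine (hquot.log (div_ne_zero hr four_ne_zero)).congr_deriv ?_
  field_simp

noncomputable def fC' (r : ℝ) : ℝ := -r * arctanh r - log ((1 - r ^ 2) / 4) / 4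

lemma hasDerivAt_fC {r : ℝ} (hr : 1 - r ^ 2 ≠ 0) : HasDerivAt fC (fC' r) r := by
  have hsq : HasDerivAt (fun x => -(x ^ 2 / 2)) (-(2 * r ^ 1 / 2)) r :=
    ((hasDerivAt_pow 2 r).div_const 2).neg
  have hlin : HasDerivAt (fun x => x / 4) (1 / 4) r := (hasDerivAt_id r).div_const 4
  refine ((hsq.mul (hasDerivAt_arctanh hr)).sub
    (hlin.mul (hasDerivAt_log_one_sub_sq_div_four hr))).congr_deriv ?_
  simp only [fC']
  field_simp
  ring

lemma hasDerivAt_fC' {r : ℝ} (hr : 1 - r ^ 2 ≠ 0) :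
    HasDerivAt fC' (-(r / (2 * (1 - r ^ 2))) - arctanh r) r := by
  refine (((hasDerivAt_neg r).mul (hasDerivAt_arctanh hr)).sub
    ((hasDerivAt_log_one_sub_sq_div_four hr).div_const 4)).congr_deriv ?_
  field_simp
  ring

lemma deriv_fC_eventuallyEq {r : ℝ} (hr : 1 - r ^ 2 ≠ 0) : deriv fC =ᶠ[nhds r] fC' := by
  have hcont : Continuous fun x : ℝ => 1 - x ^ 2 := by fun_prop
  filter_upwards [hcont.continuousAt.eventually_ne hr] with x hx
  exact (hasDerivAt_fC hx).deriv

lemma hasDerivAt_deriv_fC {r : ℝ} (hr : 1 - r ^ 2 ≠ 0) :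
    HasDerivAt (deriv fC) (-(r / (2 * (1 - r ^ 2))) - arctanh r) r :=
  (hasDerivAt_fC' hr).congr_of_eventuallyEq (deriv_fC_eventuallyEq hr)

lemma one_sub_sq_pos {r : ℝ} (hr : r ∈ Ioo 0 1) : 0 < 1 - r ^ 2 := by
  nlinarith [hr.1, hr.2]

lemma second_deriv_fC_neg {r : ℝ} (hr : r ∈ Ioo 0 1) :
    -(r / (2 * (1 - r ^ 2))) - arctanh r < 0 := by
  have : 0 < r / (2 * (1 - r ^ 2)) := div_pos hr.1 (by linarith [one_sub_sq_pos hr])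
  linarith [arctanh_pos hr]

/-- second derivative of the one-qubit complexity profile, its negativity,
and strict concavity of the profile on (0,1). -/
theorem second_deriv_fC :
    (∀ r : ℝ, 0 < r → r < 1 →
      HasDerivAt (deriv fC) (-(r / (2 * (1 - r^2))) - arctanh r) r ∧
      -(r / (2 * (1 - r^2))) - arctanh r < 0) ∧
    StrictConcaveOn ℝ (Set.Ioo (0:ℝ) 1) fC := by
  have second_deriv : ∀ r ∈ Ioo (0 : ℝ) 1,
      HasDerivAt (deriv fC) (-(r / (2 * (1 - r ^ 2))) - arctanh r) r :=
    fun r hr => hasDerivAt_deriv_fC (one_sub_sq_pos hr).ne'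
  refine ⟨fun r h0 h1 => ⟨second_deriv r ⟨h0, h1⟩, second_deriv_fC_neg ⟨h0, h1⟩⟩, ?_⟩
  refine strictConcaveOn_of_deriv2_neg' (convex_Ioo 0 1) ?_ fun r hr => ?_
  · exact fun r hr => (hasDerivAt_fC (one_sub_sq_pos hr).ne').continuousAt.continuousWithinAt
  · rw [Function.iterate_succ_apply, Function.iterate_one, (second_deriv r hr).deriv]
    exact second_deriv_fC_neg hr
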